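/- Let 1 ≤ k ≤ n, let t ∈ [0,1], let η be a nonnegative, normalized, decomposable element of Λᵏ⁻¹(ℝⁿ) lying in the subalgebra generated by e₂,…,eₙ, and let ω be a nonnegative, normalized, decomposable element of Λᵏ(ℝⁿ) lying in the subalgebra generated by e₂,…,eₙ such that ω = v ∧ η for some v ∈ ℝⁿ. Then ρ = t·(e₁ ∧ η) + (1−t)·ω is a nonnegative, normalized, decomposable element of Λᵏ(ℝⁿ). -/

import Mathlib

/-! The elements `e₁ ∧ η` and `ω = v ∧ η` share the factor `η`, so
`ρ = (t e₁ + (1 - t) v) ∧ η` is decomposable. Nonnegativity and normalization survive convex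
combinations, so only `e₁ ∧ η` needs work: `η` has no `e₁`-component and `1` is the least index,
hence `e₁ ∧ e_A = e_{A ∪ {1}}` with no sign, and the coordinates of `e₁ ∧ η` are those of `η`
transported to the subsets containing `1`. -/

open ExteriorAlgebra

noncomputable section

/-- The basis `k`-vector `e_A`, the wedge of the standard basis vectors indexed by `A`
in increasing order. -/
def eWedge (n : ℕ) (A : Finset (Fin n)) : ExteriorAlgebra ℝ (Fin n → ℝ) :=
  ((A.sort (· ≤ ·)).map fun i => ι ℝ (Pi.single i (1 : ℝ))).prod

/-- `ω ∈ Λᵏ(ℝⁿ)` has coordinates `c` with respect to the basis `{e_A}`. -/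
def HasCoords {n k : ℕ} (ω : ⋀[ℝ]^k (Fin n → ℝ))
    (c : {A : Finset (Fin n) // A.card = k} → ℝ) : Prop :=
  (ω : ExteriorAlgebra ℝ (Fin n → ℝ)) =
    ∑ A : {A : Finset (Fin n) // A.card = k}, c A • eWedge n A.1

/-- `ω` is nonnegative: all its coordinates are nonnegative. -/
def IsNonneg {n k : ℕ} (ω : ⋀[ℝ]^k (Fin n → ℝ)) : Prop :=
  ∃ c, HasCoords ω c ∧ ∀ A, 0 ≤ c A

/-- `ω` is positive: all its coordinates are positive. -/
def IsPositive {n k : ℕ} (ω : ⋀[ℝ]^k (Fin n → ℝ)) : Prop :=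
  ∃ c, HasCoords ω c ∧ ∀ A, 0 < c A

/-- `ω` is normalized: its coordinates sum to `1`. -/
def IsNormalized {n k : ℕ} (ω : ⋀[ℝ]^k (Fin n → ℝ)) : Prop :=
  ∃ c, HasCoords ω c ∧ ∑ A, c A = 1

/-- `ω` is decomposable: it is a wedge of `k` vectors of `ℝⁿ`. -/
def IsDecomposable {n k : ℕ} (ω : ⋀[ℝ]^k (Fin n → ℝ)) : Prop :=
  ∃ v : Fin k → (Fin n → ℝ), (ω : ExteriorAlgebra ℝ (Fin n → ℝ)) = ιMulti ℝ k v

section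
variable {n k m : ℕ}

def eBasis (n k : ℕ) : Module.Basis {A : Finset (Fin n) // A.card = k} ℝ (⋀[ℝ]^k (Fin n → ℝ)) :=
  ((Pi.basisFun ℝ (Fin n)).exteriorPower k).reindex
    (Equiv.subtypeEquivRight fun _ => Set.powersetCard.mem_iff)

lemma coe_eBasis (A : {A : Finset (Fin n) // A.card = k}) :
    (eBasis n k A : ExteriorAlgebra ℝ (Fin n → ℝ)) = eWedge n A.1 := by
  rw [eBasis, Module.Basis.reindex_apply, exteriorPower.basis_apply,
    exteriorPower.ιMulti_family_apply_coe, ExteriorAlgebra.ιMulti_family, ιMulti_apply, eWedge,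
    ← Finset.listMap_orderEmbOfFin_finRange A.1 A.2, List.map_map, List.ofFn_eq_map]
  simp [Function.comp_def, Set.powersetCard.ofFinEmbEquiv_symm_apply]

lemma hasCoords_iff {ω : ⋀[ℝ]^k (Fin n → ℝ)} {c : {A : Finset (Fin n) // A.card = k} → ℝ} :
    HasCoords ω c ↔ ω = ∑ A, c A • eBasis n k A := by
  simp [HasCoords, Subtype.ext_iff, coe_eBasis]

lemma HasCoords.unique {ω : ⋀[ℝ]^k (Fin n → ℝ)} {c c' : {A : Finset (Fin n) // A.card = k} → ℝ}
    (h : HasCoords ω c) (h' : HasCoords ω c') : c = c' := by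
  rw [hasCoords_iff] at h h'
  rw [← (eBasis n k).repr_sum_self c, ← h, h', (eBasis n k).repr_sum_self]

lemma HasCoords.smul_add_smul {x y : ⋀[ℝ]^k (Fin n → ℝ)}
    {c d : {A : Finset (Fin n) // A.card = k} → ℝ} (hx : HasCoords x c) (hy : HasCoords y d)
    (a b : ℝ) : HasCoords (a • x + b • y) (a • c + b • d) := by
  rw [hasCoords_iff] at *
  rw [hx, hy, Finset.smul_sum, Finset.smul_sum, ← Finset.sum_add_distrib]
  simp only [Pi.add_apply, Pi.smul_apply, smul_eq_mul, add_smul, mul_smul]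

lemma IsNonneg.smul_add_smul {x y : ⋀[ℝ]^k (Fin n → ℝ)} (hx : IsNonneg x) (hy : IsNonneg y)
    {a b : ℝ} (ha : 0 ≤ a) (hb : 0 ≤ b) : IsNonneg (a • x + b • y) := by
  obtain ⟨c, hc, hc0⟩ := hx
  obtain ⟨d, hd, hd0⟩ := hy
  exact ⟨_, hc.smul_add_smul hd a b, fun A =>
    add_nonneg (mul_nonneg ha (hc0 A)) (mul_nonneg hb (hd0 A))⟩

lemma IsNormalized.smul_add_smul {x y : ⋀[ℝ]^k (Fin n → ℝ)} (hx : IsNormalized x)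
    (hy : IsNormalized y) {a b : ℝ} (hab : a + b = 1) : IsNormalized (a • x + b • y) := by
  obtain ⟨c, hc, hc1⟩ := hx
  obtain ⟨d, hd, hd1⟩ := hy
  refine ⟨_, hc.smul_add_smul hd a b, ?_⟩
  simp only [Pi.add_apply, Pi.smul_apply, smul_eq_mul, Finset.sum_add_distrib, ← Finset.mul_sum,
    hc1, hd1, mul_one, hab]

lemma IsDecomposable.of_coe_eq_ι_mul {η : ⋀[ℝ]^m (Fin n → ℝ)}
    {ρ : ⋀[ℝ]^(m + 1) (Fin n → ℝ)} (hη : IsDecomposable η) {v : Fin n → ℝ}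
    (hρ : (ρ : ExteriorAlgebra ℝ (Fin n → ℝ)) = ι ℝ v * (η : ExteriorAlgebra ℝ (Fin n → ℝ))) :
    IsDecomposable ρ := by
  obtain ⟨u, hu⟩ := hη
  exact ⟨Matrix.vecCons v u, by
    rw [hρ, hu, ιMulti_succ_apply, Matrix.cons_val_zero, Matrix.tail_cons]⟩

lemma single_mul_eWedge {z : Fin n} {A : Finset (Fin n)} (hz : ∀ b ∈ A, z < b) :
    ι ℝ (Pi.single z 1 : Fin n → ℝ) * eWedge n A = eWedge n (insert z A) := by
  rw [eWedge, eWedge, Finset.sort_insert _ (fun b hb => (hz b hb).le)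
    (fun hzA => lt_irrefl z (hz z hzA)), List.map_cons, List.prod_cons]

lemma sum_card_eq_sum_card_succ_insert {α E : Type*} [Fintype α] [DecidableEq α]
    [AddCommMonoid E] (z : α) {m : ℕ}
    (f : {A : Finset α // A.card = m} → E) (g : {B : Finset α // B.card = m + 1} → E)
    (hf : ∀ A, z ∈ A.1 → f A = 0) (hg : ∀ B, z ∉ B.1 → g B = 0)
    (hfg : ∀ A (hA : z ∉ A.1),
      f A = g ⟨insert z A.1, by rw [Finset.card_insert_of_notMem hA, A.2]⟩) :
    ∑ A, f A = ∑ B, g B := by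
  rw [← Finset.sum_filter_not_add_sum_filter Finset.univ (fun A => z ∈ A.1) f,
    ← Finset.sum_filter_add_sum_filter_not Finset.univ (fun B => z ∈ B.1) g,
    Finset.sum_eq_zero (fun A hA => hf A (Finset.mem_filter.mp hA).2),
    Finset.sum_eq_zero (fun B hB => hg B (Finset.mem_filter.mp hB).2), add_zero, add_zero]
  refine Finset.sum_bij'
    (fun A hA => ⟨insert z A.1, by
      rw [Finset.card_insert_of_notMem (Finset.mem_filter.mp hA).2, A.2]⟩)
    (fun B hB => ⟨B.1.erase z, by
      rw [Finset.card_erase_of_mem (Finset.mem_filter.mp hB).2, B.2, Nat.add_sub_cancel]⟩)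
    (fun A _ => by simp) (fun B _ => by simp) ?_ ?_ ?_
  · exact fun A hA => Subtype.ext (Finset.erase_insert (Finset.mem_filter.mp hA).2)
  · exact fun B hB => Subtype.ext (Finset.insert_erase (Finset.mem_filter.mp hB).2)
  · exact fun A hA => hfg A (Finset.mem_filter.mp hA).2

def insertCoords (z : Fin n) (c : {A : Finset (Fin n) // A.card = m} → ℝ)
    (B : {B : Finset (Fin n) // B.card = m + 1}) : ℝ :=
  if hB : z ∈ B.1 then
    c ⟨B.1.erase z, by rw [Finset.card_erase_of_mem hB, B.2, Nat.add_sub_cancel]⟩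
  else 0

lemma insertCoords_insert (z : Fin n) (c : {A : Finset (Fin n) // A.card = m} → ℝ)
    (A : {A : Finset (Fin n) // A.card = m}) (hA : z ∉ A.1) :
    insertCoords z c ⟨insert z A.1, by rw [Finset.card_insert_of_notMem hA, A.2]⟩ = c A := by
  rw [insertCoords, dif_pos (Finset.mem_insert_self z A.1)]
  exact congrArg c (Subtype.ext (Finset.erase_insert hA))

lemma insertCoords_of_notMem (z : Fin n) (c : {A : Finset (Fin n) // A.card = m} → ℝ)
    {B : {B : Finset (Fin n) // B.card = m + 1}} (hB : z ∉ B.1) : insertCoords z c B = 0 :=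
  dif_neg hB

lemma insertCoords_nonneg {z : Fin n} {c : {A : Finset (Fin n) // A.card = m} → ℝ}
    (hc : ∀ A, 0 ≤ c A) (B : {B : Finset (Fin n) // B.card = m + 1}) :
    0 ≤ insertCoords z c B := by
  unfold insertCoords
  split_ifs
  exacts [hc _, le_rfl]

lemma sum_insertCoords {z : Fin n} {c : {A : Finset (Fin n) // A.card = m} → ℝ}
    (hc : ∀ A, z ∈ A.1 → c A = 0) : ∑ B, insertCoords z c B = ∑ A, c A :=
  (sum_card_eq_sum_card_succ_insert z c _ hc (fun _ => insertCoords_of_notMem z c)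
    fun A hA => (insertCoords_insert z c A hA).symm).symm

lemma HasCoords.single_mul {η : ⋀[ℝ]^m (Fin n → ℝ)} {μ : ⋀[ℝ]^(m + 1) (Fin n → ℝ)}
    {z : Fin n} {c : {A : Finset (Fin n) // A.card = m} → ℝ} (hη : HasCoords η c)
    (hz : ∀ b, z ≤ b) (hc : ∀ A, z ∈ A.1 → c A = 0)
    (hμ : (μ : ExteriorAlgebra ℝ (Fin n → ℝ)) =
      ι ℝ (Pi.single z (1 : ℝ)) * (η : ExteriorAlgebra ℝ (Fin n → ℝ))) :
    HasCoords μ (insertCoords z c) := by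
  rw [HasCoords, hμ, hη, Finset.mul_sum]
  refine sum_card_eq_sum_card_succ_insert z _ _
    (fun A hA => by rw [hc A hA, zero_smul, mul_zero])
    (fun B hB => by rw [insertCoords_of_notMem z c hB, zero_smul]) fun A hA => ?_
  have hzA : ∀ b ∈ A.1, z < b := fun b hb => (hz b).lt_of_ne (ne_of_mem_of_not_mem hb hA).symm
  rw [mul_smul_comm, single_mul_eWedge hzA, insertCoords_insert z c A hA]

end

/-- Reconstruction step: if `η ∈ Λᵏ⁻¹(ℝⁿ)` and `ω ∈ Λᵏ(ℝⁿ)` are nonnegative, normalized,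
decomposable elements lying in the subalgebra generated by `e₂,…,eₙ`, with `ω = v ∧ η`
for some vector `v`, then for `t ∈ [0,1]` the element `ρ = t·(e₁ ∧ η) + (1-t)·ω` is a
nonnegative, normalized, decomposable element of `Λᵏ(ℝⁿ)`. -/
theorem reconstruction (n k : ℕ) (hk : 1 ≤ k) (hkn : k ≤ n)
    (t : ℝ) (ht0 : 0 ≤ t) (ht1 : t ≤ 1)
    (η : ⋀[ℝ]^(k-1) (Fin n → ℝ))
    (hηnn : IsNonneg η) (hηnorm : IsNormalized η) (hηdec : IsDecomposable η)
    (hηsub : ∃ c, HasCoords η c ∧ ∀ A : {A : Finset (Fin n) // A.card = k - 1},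
      (⟨0, by omega⟩ : Fin n) ∈ A.1 → c A = 0)
    (ω : ⋀[ℝ]^k (Fin n → ℝ))
    (hωnn : IsNonneg ω) (hωnorm : IsNormalized ω)
    (hcontain : ∃ v : Fin n → ℝ,
      (ω : ExteriorAlgebra ℝ (Fin n → ℝ)) =
        ι ℝ v * (η : ExteriorAlgebra ℝ (Fin n → ℝ)))
    (μ : ⋀[ℝ]^k (Fin n → ℝ))
    (hμ : (μ : ExteriorAlgebra ℝ (Fin n → ℝ)) =
      ι ℝ (Pi.single (⟨0, by omega⟩ : Fin n) (1 : ℝ)) *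
        (η : ExteriorAlgebra ℝ (Fin n → ℝ))) :
    IsNonneg (t • μ + (1 - t) • ω) ∧ IsNormalized (t • μ + (1 - t) • ω) ∧
      IsDecomposable (t • μ + (1 - t) • ω) := by
  obtain ⟨m, rfl⟩ : ∃ m, k = m + 1 := ⟨k - 1, by omega⟩
  set e₁ : Fin n := ⟨0, by omega⟩
  obtain ⟨c, hc, hc0⟩ := hηsub
  have hμc := hc.single_mul (fun b => Nat.zero_le b.1) hc0 hμ
  have hμnn : IsNonneg μ := by
    obtain ⟨c', hc', hc'nn⟩ := hηnn
    exact ⟨_, hμc, insertCoords_nonneg (hc'.unique hc ▸ hc'nn)⟩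
  have hμnorm : IsNormalized μ := by
    obtain ⟨c', hc', hc'sum⟩ := hηnorm
    exact ⟨_, hμc, by rw [sum_insertCoords hc0, ← hc'.unique hc]; exact hc'sum⟩
  obtain ⟨v, hv⟩ := hcontain
  refine ⟨hμnn.smul_add_smul hωnn ht0 (by linarith), hμnorm.smul_add_smul hωnorm (by ring),
    hηdec.of_coe_eq_ι_mul (v := t • Pi.single e₁ 1 + (1 - t) • v) ?_⟩
  rw [Submodule.coe_add, SetLike.val_smul, SetLike.val_smul, hμ, hv, map_add, map_smul, map_smul,
    add_mul, smul_mul_assoc, smul_mul_assoc]
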